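/- arXiv:2505.11252 — 4 statements merged into one kernel-verified Lean document; each statement's English description precedes it below -/
import Mathlib

section
/- Let A and B be lists of natural numbers, each sorted in nondecreasing order. Then merge(diff(A), diff(B)) = diff(sortedMerge(A, B)). That is, the spike-merge procedure applied directly to the differential encodings of two spike trains produces exactly the differential encoding of the chronologically merged spike train, without ever converting back to absolute times. -/
/-- Differential encoding with respect to a previous time. -/
def diffAux : ℕ → List ℕ → List ℕ
  | _, [] => []
  | prev, a :: as => (a - prev) :: diffAux a as

/-- Differential encoding: `diff [a₁, …, aₙ] = [a₁ - 0, a₂ - a₁, …, aₙ - aₙ₋₁]`. -/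
def diff (A : List ℕ) : List ℕ := diffAux 0 A

/-- The spike-merge operation on differential-time encoded spike trains. -/
def smerge : List ℕ → List ℕ → List ℕ
  | [], ys => ys
  | xs, [] => xs
  | x :: xs, y :: ys =>
    if x ≤ y then x :: smerge xs ((y - x) :: ys)
    else y :: smerge ((x - y) :: xs) ys
termination_by xs ys => xs.length + ys.length
decreasing_by all_goals simp

/-!
Encode a sorted train relative to a reference time `p` below all its spikes, as `diffAux p`.
Merging two trains encoded relative to the same `p` emits the earlier spike, say `a`, as `a - p`;
the gap `b - p` of the other head is then reduced to `(b - p) - (a - p) = b - a`, which is exactly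
re-encoding the other train relative to `a`. So the recursion of `smerge` follows that of
`List.merge`, with the reference time advancing to each emitted spike. Taking `p = 0` gives the
theorem, since a sorted list with the same multiset as `A + B` is `A.merge B`.
-/

theorem smerge_nil_right (xs : List ℕ) : smerge xs [] = xs := by
  cases xs <;> simp [smerge]

theorem smerge_cons_cons_of_le {x y : ℕ} (xs ys : List ℕ) (h : x ≤ y) :
    smerge (x :: xs) (y :: ys) = x :: smerge xs ((y - x) :: ys) := by
  rw [smerge, if_pos h]

theorem smerge_cons_cons_of_lt {x y : ℕ} (xs ys : List ℕ) (h : y < x) :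
    smerge (x :: xs) (y :: ys) = y :: smerge ((x - y) :: xs) ys := by
  rw [smerge, if_neg (Nat.not_le.mpr h)]

theorem diffAux_cons_rebase {p a b : ℕ} (bs : List ℕ) (hpa : p ≤ a) :
    (b - p - (a - p)) :: diffAux b bs = diffAux a (b :: bs) := by
  rw [Nat.sub_sub_sub_cancel_right hpa, diffAux]

theorem smerge_diffAux_eq_diffAux_merge (p : ℕ) (A B : List ℕ)
    (hA : A.Pairwise (· ≤ ·)) (hB : B.Pairwise (· ≤ ·))
    (hpA : ∀ a ∈ A, p ≤ a) (hpB : ∀ b ∈ B, p ≤ b) :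
    smerge (diffAux p A) (diffAux p B) = diffAux p (A.merge B (· ≤ ·)) := by
  induction A generalizing p B with
  | nil => simp [diffAux, smerge]
  | cons a as ihA =>
    induction B generalizing p with
    | nil => simp [diffAux, smerge_nil_right]
    | cons b bs ihB =>
      obtain ⟨has, hA⟩ := List.pairwise_cons.mp hA
      obtain ⟨hbs, hB⟩ := List.pairwise_cons.mp hB
      have hpa : p ≤ a := hpA a List.mem_cons_self
      have hpb : p ≤ b := hpB b List.mem_cons_self
      simp only [diffAux, List.cons_merge_cons, decide_eq_true_eq]
      by_cases hab : a ≤ b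
      · rw [smerge_cons_cons_of_le _ _ (Nat.sub_le_sub_right hab p), if_pos hab,
          diffAux_cons_rebase _ hpa, ihA a (b :: bs) hA (List.Pairwise.cons hbs hB) has
            (by simpa using ⟨hab, fun x hx => hab.trans (hbs x hx)⟩), diffAux]
      · have hba : b < a := Nat.lt_of_not_le hab
        rw [smerge_cons_cons_of_lt _ _ (Nat.sub_lt_sub_right hpb hba), if_neg hab,
          diffAux_cons_rebase _ hpb, ihB b hB
            (by simpa using ⟨hba.le, fun x hx => hba.le.trans (has x hx)⟩) hbs, diffAux]

theorem List.eq_merge_of_pairwise_of_coe_eq_add {α : Type*} [LinearOrder α] {A B C : List α}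
    (hA : A.Pairwise (· ≤ ·)) (hB : B.Pairwise (· ≤ ·)) (hC : C.Pairwise (· ≤ ·))
    (hCmul : (C : Multiset α) = (A : Multiset α) + (B : Multiset α)) :
    C = A.merge B (· ≤ ·) := by
  refine List.Perm.eq_of_pairwise' hC (hA.merge hB) ?_
  rw [Multiset.coe_add, Multiset.coe_eq_coe] at hCmul
  exact hCmul.trans (List.merge_perm_append _).symm

/-- Proposition 1: merging differential encodings gives the differential
encoding of the chronologically (sorted) merged spike train. -/
theorem smerge_diff_eq_diff_sortedMerge
    (A B C : List ℕ)
    (hA : A.Pairwise (· ≤ ·)) (hB : B.Pairwise (· ≤ ·))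
    (hC : C.Pairwise (· ≤ ·))
    (hCmul : (C : Multiset ℕ) = (A : Multiset ℕ) + (B : Multiset ℕ)) :
    smerge (diff A) (diff B) = diff C := by
  rw [List.eq_merge_of_pairwise_of_coe_eq_add hA hB hC hCmul]
  exact smerge_diffAux_eq_diffAux_merge 0 A B hA hB (fun _ _ => Nat.zero_le _)
    (fun _ _ => Nat.zero_le _)
end

section
/- Let A, B and C be lists of natural numbers, each sorted in nondecreasing order. Then merge(merge(diff(A), diff(B)), diff(C)) = merge(diff(A), merge(diff(B), diff(C))): the spike-merge operation is associative on differential encodings of sorted spike trains, so any tree structure of binary spike-merger elements produces the same merged differential spike train. -/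
/-!
On sorted spike trains, `diff` carries the ordinary merge of sorted lists to `smerge`:
`smerge (diff A) (diff B) = diff (A.merge B)`. The ordinary merge is associative, since both
bracketings give the unique sorted permutation of `A ++ B ++ C`.
-/

open List in
theorem List.merge_assoc_of_pairwise {α : Type*} [LinearOrder α] {A B C : List α}
    (hA : A.Pairwise (· ≤ ·)) (hB : B.Pairwise (· ≤ ·)) (hC : C.Pairwise (· ≤ ·)) :
    (A.merge B).merge C = A.merge (B.merge C) := by
  refine Perm.eq_of_pairwise' ((hA.merge hB).merge hC) (hA.merge (hB.merge hC)) ?_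
  calc (A.merge B).merge C ~ A ++ B ++ C :=
        (merge_perm_append _).trans ((merge_perm_append _).append_right C)
    _ = A ++ (B ++ C) := append_assoc A B C
    _ ~ A.merge (B.merge C) :=
        ((merge_perm_append _).trans ((merge_perm_append _).append_left A)).symm

theorem smerge_cons_cons (x y : ℕ) (xs ys : List ℕ) :
    smerge (x :: xs) (y :: ys) =
      if x ≤ y then x :: smerge xs ((y - x) :: ys) else y :: smerge ((x - y) :: xs) ys := by
  rw [smerge]

-- The chain condition (sorted, all entries `≥ p`) makes every truncated subtraction exact.
theorem smerge_diffAux {p : ℕ} {A B : List ℕ} (hA : (p :: A).IsChain (· ≤ ·))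
    (hB : (p :: B).IsChain (· ≤ ·)) :
    smerge (diffAux p A) (diffAux p B) = diffAux p (A.merge B) := by
  induction A generalizing p B with
  | nil => simp [diffAux, smerge]
  | cons a as ihA =>
    induction B generalizing p with
    | nil => simp [diffAux, smerge_nil_right]
    | cons b bs ihB =>
      obtain ⟨hpa, has⟩ := List.isChain_cons_cons.mp hA
      obtain ⟨hpb, hbs⟩ := List.isChain_cons_cons.mp hB
      simp only [diffAux, smerge_cons_cons, List.cons_merge_cons, decide_eq_true_eq]
      by_cases hab : a ≤ b
      · have hsub : b - p - (a - p) = b - a := by omega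
        rw [if_pos (by omega), if_pos hab, hsub, diffAux]
        exact congrArg _ (ihA has (List.isChain_cons_cons.mpr ⟨hab, hbs⟩))
      · have hsub : a - p - (b - p) = a - b := by omega
        rw [if_neg (by omega), if_neg hab, hsub, diffAux]
        exact congrArg _ (ihB (List.isChain_cons_cons.mpr ⟨by omega, has⟩) hbs)

theorem smerge_diff {A B : List ℕ} (hA : A.Pairwise (· ≤ ·)) (hB : B.Pairwise (· ≤ ·)) :
    smerge (diff A) (diff B) = diff (A.merge B) := by
  have chain_zero {L : List ℕ} (hL : L.Pairwise (· ≤ ·)) : (0 :: L).IsChain (· ≤ ·) :=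
    List.isChain_iff_pairwise.mpr (List.pairwise_cons.mpr ⟨fun x _ => x.zero_le, hL⟩)
  exact smerge_diffAux (chain_zero hA) (chain_zero hB)

/-- The spike-merge operation is associative on differential encodings
of sorted spike trains. -/
theorem smerge_diff_assoc
    (A B C : List ℕ) (hA : A.Pairwise (· ≤ ·)) (hB : B.Pairwise (· ≤ ·))
    (hC : C.Pairwise (· ≤ ·)) :
    smerge (smerge (diff A) (diff B)) (diff C)
      = smerge (diff A) (smerge (diff B) (diff C)) := by
  rw [smerge_diff hA hB, smerge_diff hB hC, smerge_diff (hA.merge hB) hC,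
    smerge_diff hA (hB.merge hC), List.merge_assoc_of_pairwise hA hB hC]
end

section
/- Let A be a nonempty list of natural numbers sorted in nondecreasing order. Then the sum of the entries of diff(A) equals the last entry of A. Consequently, for nonempty sorted lists A and B, the sum of the entries of merge(diff(A), diff(B)) equals max(last(A), last(B)): merging in differential time preserves total elapsed time. -/
/-- The chain condition makes every truncated subtraction exact, so the sum telescopes. -/
theorem add_sum_diffAux {prev : ℕ} {A : List ℕ} (hA : (prev :: A).IsChain (· ≤ ·)) :
    prev + (diffAux prev A).sum = (prev :: A).getLast (List.cons_ne_nil _ _) := by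
  induction A generalizing prev with
  | nil => simp [diffAux]
  | cons a as ih =>
    obtain ⟨hle, hchain⟩ := List.isChain_cons_cons.mp hA
    have htail := ih hchain
    rw [diffAux, List.sum_cons, List.getLast_cons_cons]
    omega

theorem sum_diff_of_pairwise {A : List ℕ} (hA : A ≠ []) (hAs : A.Pairwise (· ≤ ·)) :
    (diff A).sum = A.getLast hA := by
  have hchain : (0 :: A).IsChain (· ≤ ·) :=
    List.isChain_iff_pairwise.mpr (List.pairwise_cons.mpr ⟨fun _ _ => Nat.zero_le _, hAs⟩)
  simpa [diff, List.getLast_cons hA] using add_sum_diffAux hchain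

/-- Each step emits `min x y`, which lowers both remaining totals by the same amount. -/
theorem sum_smerge (xs ys : List ℕ) : (smerge xs ys).sum = max xs.sum ys.sum := by
  induction xs, ys using smerge.induct with
  | case1 ys => simp [smerge]
  | case2 xs _ => cases xs <;> simp [smerge]
  | case3 x xs y ys hxy ih =>
    rw [smerge, if_pos hxy]
    simp only [List.sum_cons] at *
    omega
  | case4 x xs y ys hxy ih =>
    rw [smerge, if_neg hxy]
    simp only [List.sum_cons] at *
    omega

/-- The entries of the differential encoding of a nonempty sorted spike train
sum (telescope) to its last absolute spike time, and merging in differential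
time preserves the total elapsed time. -/
theorem sum_diff_eq_getLast
    (A B : List ℕ) (hA : A ≠ []) (hB : B ≠ [])
    (hAs : A.Pairwise (· ≤ ·)) (hBs : B.Pairwise (· ≤ ·)) :
    (diff A).sum = A.getLast hA ∧
    (smerge (diff A) (diff B)).sum = max (A.getLast hA) (B.getLast hB) := by
  refine ⟨sum_diff_of_pairwise hA hAs, ?_⟩
  rw [sum_smerge, sum_diff_of_pairwise hA hAs, sum_diff_of_pairwise hB hBs]
end

section
/- Let A be a nonempty list of natural numbers sorted in nondecreasing order whose last entry is T. Then every entry d of diff(A) satisfies d ≤ T, and consequently ⌈log₂(d+1)⌉ ≤ ⌈log₂(T+1)⌉ for every entry d of diff(A). Hence even in the worst case, the bit width required to represent each symbol of the differential time encoding (without overflow symbols) is at most the bit width ⌈log₂(T+1)⌉ required by the absolute time encoding. -/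
theorem exists_ge_of_mem_diffAux {prev d : ℕ} {A : List ℕ} (hd : d ∈ diffAux prev A) :
    ∃ a ∈ A, d ≤ a := by
  induction A generalizing prev with
  | nil => simp [diffAux] at hd
  | cons a as ih =>
    rcases List.mem_cons.1 hd with rfl | hd
    · exact ⟨a, List.mem_cons_self, Nat.sub_le a prev⟩
    · obtain ⟨b, hb, hdb⟩ := ih hd
      exact ⟨b, List.mem_cons_of_mem a hb, hdb⟩

/-- Every differential time of a nonempty sorted spike train with last spike
at time `T` is at most `T`; hence the per-symbol bit width
`⌈log₂(d+1)⌉ = Nat.clog 2 (d+1)` of the differential encoding is at most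
the bit width `⌈log₂(T+1)⌉ = Nat.clog 2 (T+1)` of the absolute encoding. -/
theorem diff_le_last_and_bitwidth
    (A : List ℕ) (hA : A ≠ []) (hAs : A.Pairwise (· ≤ ·))
    (T : ℕ) (hT : A.getLast hA = T) :
    ∀ d ∈ diff A, d ≤ T ∧ Nat.clog 2 (d + 1) ≤ Nat.clog 2 (T + 1) := by
  intro d hd
  obtain ⟨a, ha, hda⟩ := exists_ge_of_mem_diffAux hd
  have hdT : d ≤ T := hT ▸ hda.trans (hAs.rel_getLast ha)
  exact ⟨hdT, Nat.clog_mono_right 2 (Nat.succ_le_succ hdT)⟩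
end
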